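/- Let S ∈ Sym_h(ℚ) be positive definite, T ∈ 𝔥_n, Z ∈ M_{n,h}(ℂ). For all M, N ∈ M_{n,h}(ℤ): θ^S(T, Z + T M S + N) · exp(πi Tr(ᵗM T M S + 2 ᵗM Z)) = θ^S(T, Z), where θ^S(T,Z) := Σ_{L ∈ M_{n,h}(ℤ)} exp(πi Tr(ᵗL T L S + 2 ᵗL Z)). -/

import Mathlib

/-!
Substituting `L ↦ L + M` in the series for `θ^S(T, Z)` turns its general term into the term of
index `L` of `θ^S(T, Z + TMS + N)` times `e^{πi Tr(ᵗM T M S + 2ᵗM Z)}` times `e^{2πi Tr(ᵗL N)}`: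
expanding the quadratic form, the two cross terms `Tr(ᵗL T M S)` and `Tr(ᵗM T L S)` agree because
`T` and `S` are symmetric, and the last factor is `1` because `Tr(ᵗL N)` is an integer.
-/

open Real Complex Matrix

/-- The generalized theta series
`θ^S(T,Z) = Σ_{L∈M_{n,h}(ℤ)} e^{πi Tr(ᵗL T L S + 2ᵗL Z)}`. -/
noncomputable def thetaS (n h : ℕ) (S : Matrix (Fin h) (Fin h) ℚ)
    (T : Matrix (Fin n) (Fin n) ℂ) (Z : Matrix (Fin n) (Fin h) ℂ) : ℂ :=
  ∑' L : Matrix (Fin n) (Fin h) ℤ, Complex.exp ((π : ℂ) * Complex.I *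
    (((L.map (Int.cast : ℤ → ℂ))ᵀ * T * L.map (Int.cast : ℤ → ℂ) *
        S.map (Rat.cast : ℚ → ℂ) +
      (2 : ℂ) • ((L.map (Int.cast : ℤ → ℂ))ᵀ * Z)).trace))

section ThetaPhase

variable {R m n : Type*} [CommRing R] [Fintype m] [Fintype n]

/-- The exponent of the term of index `X` of the theta series, divided by `πi`. -/
def thetaPhase (T : Matrix m m R) (S : Matrix n n R) (Z X : Matrix m n R) : R :=
  (Xᵀ * T * X * S + (2 : R) • (Xᵀ * Z)).trace

theorem Matrix.trace_transpose_mul_mul_mul_comm {T : Matrix m m R} {S : Matrix n n R}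
    (hT : Tᵀ = T) (hS : Sᵀ = S) (A B : Matrix m n R) :
    (Bᵀ * T * A * S).trace = (Aᵀ * T * B * S).trace := by
  rw [← trace_transpose, ← trace_mul_comm]
  simp only [transpose_mul, transpose_transpose, hT, hS, Matrix.mul_assoc]

theorem thetaPhase_shift_add {T : Matrix m m R} {S : Matrix n n R} (hT : Tᵀ = T)
    (hS : Sᵀ = S) (Z A B N : Matrix m n R) :
    thetaPhase T S (Z + T * B * S + N) A + thetaPhase T S Z B =
      thetaPhase T S Z (A + B) + 2 * (Aᵀ * N).trace := by
  have hcross := trace_transpose_mul_mul_mul_comm hT hS A B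
  simp only [thetaPhase, transpose_add, Matrix.add_mul, Matrix.mul_add, trace_add, trace_smul,
    smul_eq_mul, Matrix.mul_assoc] at hcross ⊢
  rw [hcross]
  ring

end ThetaPhase

theorem Matrix.trace_transpose_mul_map_intCast {R m n : Type*} [Ring R] [Fintype m]
    [Fintype n] (L N : Matrix m n ℤ) :
    ((L.map (Int.cast : ℤ → R))ᵀ * N.map (Int.cast : ℤ → R)).trace = ((Lᵀ * N).trace : R) := by
  change _ = Int.castRingHom R _
  rw [AddMonoidHom.map_trace, Matrix.map_mul, transpose_map]
  rfl

theorem exp_thetaPhase_shift_mul {m n : Type*} [Fintype m] [Fintype n]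
    {T : Matrix m m ℂ} {S : Matrix n n ℂ} (hT : Tᵀ = T) (hS : Sᵀ = S)
    (Z : Matrix m n ℂ) (L M N : Matrix m n ℤ) :
    Complex.exp (π * I * thetaPhase T S (Z + T * M.map (Int.cast : ℤ → ℂ) * S +
          N.map (Int.cast : ℤ → ℂ)) (L.map Int.cast)) *
        Complex.exp (π * I * thetaPhase T S Z (M.map Int.cast)) =
      Complex.exp (π * I * thetaPhase T S Z ((L + M).map Int.cast)) := by
  rw [← Complex.exp_add, ← mul_add, thetaPhase_shift_add hT hS, trace_transpose_mul_map_intCast,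
    Matrix.map_add _ (Int.cast_add (R := ℂ)), mul_add, Complex.exp_add,
    show (π : ℂ) * I * (2 * ((Lᵀ * N).trace : ℂ)) = (Lᵀ * N).trace * (2 * π * I) by ring,
    Complex.exp_int_mul_two_pi_mul_I, mul_one]

theorem thetaS_eq_tsum_exp_thetaPhase (n h : ℕ) (S : Matrix (Fin h) (Fin h) ℚ)
    (T : Matrix (Fin n) (Fin n) ℂ) (Z : Matrix (Fin n) (Fin h) ℂ) :
    thetaS n h S T Z = ∑' L : Matrix (Fin n) (Fin h) ℤ,
      Complex.exp (π * I * thetaPhase T (S.map Rat.cast) Z (L.map Int.cast)) := rfl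

theorem thetaS_quasi_periodic_general (n h : ℕ) (S : Matrix (Fin h) (Fin h) ℚ)
    (hSsymm : Sᵀ = S)
    (T : Matrix (Fin n) (Fin n) ℂ) (hT : Tᵀ = T)
    (Z : Matrix (Fin n) (Fin h) ℂ) (M N : Matrix (Fin n) (Fin h) ℤ) :
    thetaS n h S T
        (Z + T * M.map (Int.cast : ℤ → ℂ) * S.map (Rat.cast : ℚ → ℂ) +
          N.map (Int.cast : ℤ → ℂ)) *
      Complex.exp ((π : ℂ) * Complex.I *
        (((M.map (Int.cast : ℤ → ℂ))ᵀ * T * M.map (Int.cast : ℤ → ℂ) *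
            S.map (Rat.cast : ℚ → ℂ) +
          (2 : ℂ) • ((M.map (Int.cast : ℤ → ℂ))ᵀ * Z)).trace)) =
    thetaS n h S T Z := by
  have hS : (S.map (Rat.cast : ℚ → ℂ))ᵀ = S.map Rat.cast := by rw [← transpose_map, hSsymm]
  rw [thetaS_eq_tsum_exp_thetaPhase, thetaS_eq_tsum_exp_thetaPhase, ← tsum_mul_right,
    ← (Equiv.addRight M).tsum_eq fun L =>
      Complex.exp (π * I * thetaPhase T (S.map Rat.cast) Z (L.map Int.cast))]
  exact tsum_congr fun L => exp_thetaPhase_shift_mul hT hS Z L M N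

/-- Quasi-periodicity of the generalized Jacobi theta: for all `M, N ∈ M_{n,h}(ℤ)`,
`θ^S(T, Z + TMS + N) · e^{πi Tr(ᵗM T M S + 2ᵗM Z)} = θ^S(T,Z)`. -/
theorem thetaS_quasi_periodic (n h : ℕ) (S : Matrix (Fin h) (Fin h) ℚ)
    (hSsymm : Sᵀ = S) (hSpos : (S.map (Rat.cast : ℚ → ℝ)).PosDef)
    (T : Matrix (Fin n) (Fin n) ℂ) (hT : Tᵀ = T)
    (hTim : Matrix.PosDef (Matrix.of fun i j => (T i j).im))
    (Z : Matrix (Fin n) (Fin h) ℂ) (M N : Matrix (Fin n) (Fin h) ℤ) :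
    thetaS n h S T
        (Z + T * M.map (Int.cast : ℤ → ℂ) * S.map (Rat.cast : ℚ → ℂ) +
          N.map (Int.cast : ℤ → ℂ)) *
      Complex.exp ((π : ℂ) * Complex.I *
        (((M.map (Int.cast : ℤ → ℂ))ᵀ * T * M.map (Int.cast : ℤ → ℂ) *
            S.map (Rat.cast : ℚ → ℂ) +
          (2 : ℂ) • ((M.map (Int.cast : ℤ → ℂ))ᵀ * Z)).trace)) =
    thetaS n h S T Z :=
  thetaS_quasi_periodic_general n h S hSsymm T hT Z M N
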